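/- arXiv:0810.5717 — 4 statements merged into one kernel-verified Lean document; each statement's English description precedes it below -/
import Mathlib

section
/- Completeness of system A relative to semi-lattice inclusion: if C is a finite set of CI statements over S and c is a CI statement with L(c) ⊆ ⋃_{c' ∈ C} L(c'), then c is derivable from C using the inference rules triviality, symmetry, decomposition, contraction, strong union, and strong contraction. -/
open Finset

/-- A CI statement (A ⊥ B | C): pairwise disjoint finsets. -/
structure CI (α : Type*) [DecidableEq α] where
  A : Finset α
  B : Finset α
  C : Finset α
  dAB : Disjoint A B
  dAC : Disjoint A C
  dBC : Disjoint B C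

def ciLattice {α : Type*} [Fintype α] [DecidableEq α] (c : CI α) : Set (Finset α) :=
  {U | c.C ⊆ U ∧ ¬ c.A ⊆ U ∧ ¬ c.B ⊆ U}

/-- Derivability under system A: triviality, symmetry, decomposition, contraction,
strong union, strong contraction. -/
inductive Derivable {α : Type*} [DecidableEq α] (𝒞 : Set (CI α)) : CI α → Prop
  | mem {c : CI α} : c ∈ 𝒞 → Derivable 𝒞 c
  | triviality (A C : Finset α) (hAC : Disjoint A C) :
      Derivable 𝒞 ⟨A, ∅, C, by simp, hAC, by simp⟩
  | symmetry {A B C : Finset α} {h1 : Disjoint A B} {h2 : Disjoint A C} {h3 : Disjoint B C} :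
      Derivable 𝒞 ⟨A, B, C, h1, h2, h3⟩ →
      Derivable 𝒞 ⟨B, A, C, h1.symm, h3, h2⟩
  | decomposition {A B D C : Finset α} {h1 : Disjoint A (B ∪ D)} {h2 : Disjoint A C}
      {h3 : Disjoint (B ∪ D) C} :
      Derivable 𝒞 ⟨A, B ∪ D, C, h1, h2, h3⟩ →
      Derivable 𝒞 ⟨A, D, C, by simp_all [Finset.disjoint_union_right],
        h2, by simp_all [Finset.disjoint_union_left]⟩
  | contraction {A B D C : Finset α} {h1 : Disjoint A B} {h2 : Disjoint A (C ∪ D)}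
      {h3 : Disjoint B (C ∪ D)} {h4 : Disjoint A D} {h5 : Disjoint D C}
      (hBD : Disjoint B D) :
      Derivable 𝒞 ⟨A, B, C ∪ D, h1, h2, h3⟩ →
      Derivable 𝒞 ⟨A, D, C, h4, by simp_all [Finset.disjoint_union_right], h5⟩ →
      Derivable 𝒞 ⟨A, B ∪ D, C, by simp_all [Finset.disjoint_union_right],
        by simp_all [Finset.disjoint_union_right],
        by simp_all [Finset.disjoint_union_left, Finset.disjoint_union_right]⟩
  | strongUnion {A B C D : Finset α} {h1 : Disjoint A B} {h2 : Disjoint A C}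
      {h3 : Disjoint B C} (hAD : Disjoint A D) (hBD : Disjoint B D) :
      Derivable 𝒞 ⟨A, B, C, h1, h2, h3⟩ →
      Derivable 𝒞 ⟨A, B, C ∪ D, h1, by simp_all [Finset.disjoint_union_right],
        by simp_all [Finset.disjoint_union_right]⟩
  | strongContraction {A B C D E : Finset α}
      {h1 : Disjoint A B} {h2 : Disjoint A C} {h3 : Disjoint B C}
      {h4 : Disjoint D E} {h5 : Disjoint D (A ∪ C)} {h6 : Disjoint E (A ∪ C)}
      {h7 : Disjoint D (B ∪ C)} {h8 : Disjoint E (B ∪ C)} :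
      Derivable 𝒞 ⟨A, B, C, h1, h2, h3⟩ →
      Derivable 𝒞 ⟨D, E, A ∪ C, h4, h5, h6⟩ →
      Derivable 𝒞 ⟨D, E, B ∪ C, h4, h7, h8⟩ →
      Derivable 𝒞 ⟨D, E, C, h4, by simp_all [Finset.disjoint_union_right],
        by simp_all [Finset.disjoint_union_right]⟩

/-!
Induct on `L(c)` ordered by strict inclusion; every premise used below has a strictly smaller
lattice, which stays inside `⋃ c' ∈ 𝒞, L(c')`. If `A` or `B` is empty, `c` is trivial. If `B`
has two points, pick `x ∈ B`: contraction of `(A, B ∖ {x} | C ∪ {x})` and `(A, {x} | C)` gives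
`c`, and symmetrically for `A`. If `A = {x}` and `B = {y}`, then `C ∈ L(c)` lies in `L(c₁)`
for some `c₁ ∈ 𝒞`, so there are `p ∈ A₁ ∖ C` and `q ∈ B₁ ∖ C`, and `({p}, {q} | C)` follows
from `c₁` by decomposition and strong union. By induction `({x}, {y} | C ∪ {z})` holds for
every `z ∉ C ∪ {x, y}`; if `{p, q}` meets `{x, y}`, one contraction along the shared point
yields `c`, and otherwise strong contraction of `({p}, {q} | C)` with the cases `z = p` and
`z = q` does.
-/

section

variable {α : Type*} [DecidableEq α] {𝒞 : Set (CI α)}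

namespace CI

def symm (c : CI α) : CI α := ⟨c.B, c.A, c.C, c.dAB.symm, c.dBC, c.dAC⟩

end CI

section Lattice

variable [Fintype α]

theorem ciLattice_symm (c : CI α) : ciLattice c.symm = ciLattice c := by
  ext U
  exact and_congr_right fun _ => and_comm

theorem ciLattice_mono {c c' : CI α} (hA : c'.A ⊆ c.A) (hB : c'.B ⊆ c.B) (hC : c.C ⊆ c'.C) :
    ciLattice c' ⊆ ciLattice c := fun _ ⟨hCU, hAU, hBU⟩ =>
  ⟨hC.trans hCU, fun h => hAU (hA.trans h), fun h => hBU (hB.trans h)⟩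

theorem C_mem_ciLattice {c : CI α} (hA : c.A.Nonempty) (hB : c.B.Nonempty) :
    c.C ∈ ciLattice c :=
  ⟨subset_rfl, fun h => hA.ne_empty (disjoint_self.1 (c.dAC.mono_right h)),
    fun h => hB.ne_empty (disjoint_self.1 (c.dBC.mono_right h))⟩

theorem ciLattice_ssubset_of_mem {c c' : CI α} (hA : c'.A ⊆ c.A) (hB : c'.B ⊆ c.B)
    (hC : c.C ⊆ c'.C) {U : Finset α} (hU : U ∈ ciLattice c) (hU' : U ∉ ciLattice c') :
    ciLattice c' ⊂ ciLattice c :=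
  (Set.ssubset_iff_of_subset (ciLattice_mono hA hB hC)).2 ⟨U, hU, hU'⟩

theorem ciLattice_ssubset_of_C_ssubset {c c' : CI α} (hA : c.A.Nonempty) (hB : c.B.Nonempty)
    (hA' : c'.A ⊆ c.A) (hB' : c'.B ⊆ c.B) (hC : c.C ⊂ c'.C) : ciLattice c' ⊂ ciLattice c :=
  ciLattice_ssubset_of_mem hA' hB' hC.subset (C_mem_ciLattice hA hB) fun h => hC.2 h.1

end Lattice

namespace Derivable

theorem symm {c : CI α} (h : Derivable 𝒞 c) : Derivable 𝒞 c.symm :=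
  symmetry h

theorem of_B_eq_empty {c : CI α} (hB : c.B = ∅) : Derivable 𝒞 c := by
  cases c with | mk A B C _ hAC _
  dsimp only at hB
  subst hB
  exact triviality A C hAC

theorem of_A_eq_empty {c : CI α} (hA : c.A = ∅) : Derivable 𝒞 c :=
  (of_B_eq_empty (c := c.symm) hA).symm

theorem decomposition_of_subset {c c' : CI α} (h : Derivable 𝒞 c) (hA : c'.A = c.A)
    (hB : c'.B ⊆ c.B) (hC : c'.C = c.C) : Derivable 𝒞 c' := by
  cases c with | mk A B C hAB hAC hBC
  cases c' with | mk A' B' C'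
  dsimp only at hA hB hC
  subst hA hC
  have hsplit : B \ B' ∪ B' = B := sdiff_union_of_subset hB
  have h' : Derivable 𝒞 ⟨A', B \ B' ∪ B', C', by rwa [hsplit], hAC, by rwa [hsplit]⟩ := by
    convert h using 2
  exact h'.decomposition

theorem strongUnion_of_subset {c c' : CI α} (h : Derivable 𝒞 c) (hA : c'.A = c.A)
    (hB : c'.B = c.B) (hC : c.C ⊆ c'.C) : Derivable 𝒞 c' := by
  cases c with | mk A B C
  cases c' with | mk A' B' C' _ hAC' hBC'
  dsimp only at hA hB hC
  subst hA hB
  have h' :=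
    h.strongUnion (D := C' \ C) (hAC'.mono_right sdiff_subset) (hBC'.mono_right sdiff_subset)
  convert h' using 2
  exact (union_sdiff_of_subset hC).symm

theorem mono {c c' : CI α} (h : Derivable 𝒞 c) (hA : c'.A ⊆ c.A) (hB : c'.B ⊆ c.B)
    (hC : c.C ⊆ c'.C) : Derivable 𝒞 c' := by
  have hB' : Derivable 𝒞 ⟨c.A, c'.B, c.C, c.dAB.mono_right hB, c.dAC, c.dBC.mono_left hB⟩ :=
    h.decomposition_of_subset rfl hB rfl
  have hA' : Derivable 𝒞
      ⟨c'.B, c'.A, c.C, c'.dAB.symm, c.dBC.mono_left hB, c.dAC.mono_left hA⟩ :=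
    hB'.symm.decomposition_of_subset rfl hA rfl
  exact hA'.symm.strongUnion_of_subset rfl rfl hC

theorem of_singletons_sharing_A {c d : CI α} {x y q : α} (hd : Derivable 𝒞 d)
    (ihC : ∀ c' : CI α, c'.A = c.A → c'.B = c.B → c.C ⊂ c'.C → Derivable 𝒞 c')
    (hcA : c.A = {x}) (hcB : c.B = {y}) (hdA : d.A = {x}) (hdB : d.B = {q}) (hC : d.C = c.C) :
    Derivable 𝒞 c := by
  cases c with | mk A B C hAB hAC hBC
  cases d with | mk A' B' C' hAB' hAC' hBC'
  dsimp only at *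
  subst hcA hcB hdA hdB C'
  by_cases hqy : q = y
  · subst hqy
    exact hd
  have hq : q ∉ C := disjoint_singleton_left.1 hBC'
  have hyq : Derivable 𝒞 ⟨{x}, {y}, C ∪ {q}, hAB, by grind [disjoint_left],
      by grind [disjoint_left]⟩ := by
    refine ihC _ rfl rfl ?_
    simpa only [union_singleton] using ssubset_insert hq
  exact (hyq.contraction (by simpa using Ne.symm hqy) hd).mono subset_rfl subset_union_left
    subset_rfl

end Derivable

section Completeness

variable [Fintype α]

namespace Derivable

theorem of_nontrivial_B {c : CI α} (hA : c.A.Nonempty) (hB : c.B.Nontrivial)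
    (ih : ∀ c', ciLattice c' ⊂ ciLattice c → Derivable 𝒞 c') : Derivable 𝒞 c := by
  cases c with | mk A B C hAB hAC hBC
  obtain ⟨x, hx, y, hy, hxy⟩ := hB
  have hxA : x ∉ A := disjoint_right.1 hAB hx
  have hxC : x ∉ C := disjoint_left.1 hBC hx
  have hrest : Derivable 𝒞 ⟨A, B.erase x, C ∪ {x}, by grind [disjoint_left],
      by grind [disjoint_left], by grind [disjoint_left]⟩ := by
    refine ih _ (ciLattice_ssubset_of_C_ssubset hA ⟨x, hx⟩ subset_rfl (erase_subset x B) ?_)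
    simpa only [union_singleton] using ssubset_insert hxC
  have hxB : Derivable 𝒞 ⟨A, {x}, C, disjoint_singleton_right.2 hxA, hAC,
      disjoint_singleton_left.2 hxC⟩ := by
    refine ih _ (ciLattice_ssubset_of_mem subset_rfl (singleton_subset_iff.2 hx) subset_rfl
      (U := C ∪ {x}) ⟨subset_union_left, fun hAU => ?_, fun hBU => ?_⟩
      fun hU => hU.2.2 (by simp))
    · obtain ⟨a, ha⟩ := hA
      grind [disjoint_left]
    · grind [disjoint_left]
  refine (hrest.contraction (by simp) hxB).mono subset_rfl (fun b hb => ?_) subset_rfl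
  grind

theorem of_singletons {c : CI α} {x y : α} (hx : c.A = {x}) (hy : c.B = {y})
    (h : ciLattice c ⊆ ⋃ c' ∈ 𝒞, ciLattice c')
    (ih : ∀ c', ciLattice c' ⊂ ciLattice c → Derivable 𝒞 c') : Derivable 𝒞 c := by
  have hA : c.A.Nonempty := hx ▸ singleton_nonempty x
  have hB : c.B.Nonempty := hy ▸ singleton_nonempty y
  have ihC (c' : CI α) (hA' : c'.A = c.A) (hB' : c'.B = c.B) (hC : c.C ⊂ c'.C) :
      Derivable 𝒞 c' :=
    ih c' (ciLattice_ssubset_of_C_ssubset hA hB hA'.subset hB'.subset hC)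
  have ihC_symm (c' : CI α) (hA' : c'.A = c.symm.A) (hB' : c'.B = c.symm.B)
      (hC : c.symm.C ⊂ c'.C) : Derivable 𝒞 c' :=
    (ihC c'.symm hB' hA' hC).symm
  obtain ⟨c₁, hc₁, hC₁⟩ : ∃ c₁ ∈ 𝒞, c.C ∈ ciLattice c₁ := by
    simpa using h (C_mem_ciLattice hA hB)
  obtain ⟨p, hpA, hpC⟩ := not_subset.1 hC₁.2.1
  obtain ⟨q, hqB, hqC⟩ := not_subset.1 hC₁.2.2
  have hpq : p ≠ q := fun e => disjoint_left.1 c₁.dAB hpA (e ▸ hqB)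
  have hd : Derivable 𝒞 ⟨{p}, {q}, c.C, by simpa using hpq, by simpa using hpC,
      by simpa using hqC⟩ :=
    (mem hc₁).mono (singleton_subset_iff.2 hpA) (singleton_subset_iff.2 hqB) hC₁.1
  rcases eq_or_ne p x with rfl | hpx
  · exact of_singletons_sharing_A hd ihC hx hy rfl rfl rfl
  rcases eq_or_ne p y with rfl | hpy
  · exact (of_singletons_sharing_A (c := c.symm) hd ihC_symm hy hx rfl rfl rfl).symm
  rcases eq_or_ne q x with rfl | hqx
  · exact of_singletons_sharing_A hd.symm ihC hx hy rfl rfl rfl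
  rcases eq_or_ne q y with rfl | hqy
  · exact (of_singletons_sharing_A (c := c.symm) hd.symm ihC_symm hy hx rfl rfl rfl).symm
  cases c with | mk A B C hAB hAC hBC
  dsimp only at hx hy
  subst hx hy
  have hp : Derivable 𝒞 ⟨{x}, {y}, {p} ∪ C, hAB, by grind [disjoint_left],
      by grind [disjoint_left]⟩ :=
    ihC _ rfl rfl (by simpa only [singleton_union] using ssubset_insert hpC)
  have hq : Derivable 𝒞 ⟨{x}, {y}, {q} ∪ C, hAB, by grind [disjoint_left],
      by grind [disjoint_left]⟩ :=
    ihC _ rfl rfl (by simpa only [singleton_union] using ssubset_insert hqC)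
  exact hd.strongContraction hp hq

end Derivable

end Completeness

end

theorem systemA_complete_lattice_general {α : Type*} [Fintype α] [DecidableEq α]
    (𝒞 : Set (CI α)) (c : CI α)
    (h : ciLattice c ⊆ ⋃ c' ∈ 𝒞, ciLattice c') :
    Derivable 𝒞 c := by
  induction c using (InvImage.wf ciLattice (wellFounded_lt (α := Set (Finset α)))).induction with
  | h c ih =>
  have ih' (c' : CI α) (hc' : ciLattice c' ⊂ ciLattice c) : Derivable 𝒞 c' :=
    ih c' hc' (hc'.subset.trans h)
  obtain hA | hA := c.A.eq_empty_or_nonempty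
  · exact .of_A_eq_empty hA
  obtain hB | hB := c.B.eq_empty_or_nonempty
  · exact .of_B_eq_empty hB
  obtain ⟨y, hy⟩ | hB₂ := hB.exists_eq_singleton_or_nontrivial
  · obtain ⟨x, hx⟩ | hA₂ := hA.exists_eq_singleton_or_nontrivial
    · exact .of_singletons hx hy h ih'
    · exact (Derivable.of_nontrivial_B (c := c.symm) hB hA₂ (by rwa [ciLattice_symm])).symm
  · exact .of_nontrivial_B hA hB₂ ih'

/-- Completeness of system A relative to semi-lattice inclusion: if
L(c) ⊆ ⋃_{c' ∈ 𝒞} L(c') then 𝒞 ⊢ c. -/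
theorem systemA_complete_lattice {α : Type*} [Fintype α] [DecidableEq α]
    (𝒞 : Set (CI α)) (h𝒞 : 𝒞.Finite) (c : CI α)
    (h : ciLattice c ⊆ ⋃ c' ∈ 𝒞, ciLattice c') :
    Derivable 𝒞 c :=
  systemA_complete_lattice_general 𝒞 c h
end

section
/- The closure under system A of a CI statement c = (A,B|C) equals the closure under A of its witness decomposition wdec(c) = {({a},{b}|C) : a ∈ A, b ∈ B}. -/
/-!
Decomposition and symmetry cut any CI statement down to a subset on either side, so every
witness `({a}, {b} | C)` lies in the closure of `(A, B | C)`. Conversely, two statements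
`(A, B | C)` and `(A, D | C)` with `B`, `D` disjoint compose to `(A, B ∪ D | C)`: strong union
turns the first into `(A, B | C ∪ D)`, and contraction with the second gives the claim. Composing
witnesses one element at a time rebuilds `(A, B | C)` first from its witnesses on the right,
then, after a symmetry, on the left.
-/

open Finset

/-- The witness decomposition of a CI statement. -/
def wdec {α : Type*} [DecidableEq α] (c : CI α) : Set (CI α) :=
  {d | ∃ a, ∃ b, ∃ (ha : a ∈ c.A) (hb : b ∈ c.B), d = ⟨{a}, {b}, c.C,
    Finset.disjoint_singleton_left.2 (by
      simp only [Finset.mem_singleton]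
      exact fun h => Finset.disjoint_left.1 c.dAB ha (h ▸ hb)),
    Finset.disjoint_singleton_left.2 (Finset.disjoint_left.1 c.dAC ha),
    Finset.disjoint_singleton_left.2 (Finset.disjoint_left.1 c.dBC hb)⟩}

section

variable {α : Type*} [DecidableEq α]

namespace Derivable

variable {𝒞 : Set (CI α)}

theorem trans {𝒟 : Set (CI α)} {d : CI α} (hd : Derivable 𝒟 d)
    (h𝒟 : ∀ x ∈ 𝒟, Derivable 𝒞 x) : Derivable 𝒞 d := by
  induction hd with
  | mem hx => exact h𝒟 _ hx
  | triviality A C hAC => exact triviality A C hAC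
  | symmetry _ ih => exact symmetry ih
  | decomposition _ ih => exact decomposition ih
  | contraction hBD _ _ ih₁ ih₂ => exact contraction hBD ih₁ ih₂
  | strongUnion hAD hBD _ ih => exact strongUnion hAD hBD ih
  | strongContraction _ _ _ ih₁ ih₂ ih₃ => exact strongContraction ih₁ ih₂ ih₃

theorem mono_right {A B C D : Finset α} {h₁ : Disjoint A B} {h₂ : Disjoint A C}
    {h₃ : Disjoint B C} (h : Derivable 𝒞 ⟨A, B, C, h₁, h₂, h₃⟩) (hDB : D ⊆ B) :
    Derivable 𝒞 ⟨A, D, C, h₁.mono_right hDB, h₂, h₃.mono_left hDB⟩ := by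
  obtain ⟨E, rfl⟩ : ∃ E, B = E ∪ D := ⟨B \ D, (sdiff_union_of_subset hDB).symm⟩
  exact decomposition h

theorem mono_left {A B C D : Finset α} {h₁ : Disjoint A B} {h₂ : Disjoint A C}
    {h₃ : Disjoint B C} (h : Derivable 𝒞 ⟨A, B, C, h₁, h₂, h₃⟩) (hDA : D ⊆ A) :
    Derivable 𝒞 ⟨D, B, C, h₁.mono_left hDA, h₂.mono_left hDA, h₃⟩ :=
  symmetry (mono_right (symmetry h) hDA)

theorem union_right {A B C D : Finset α} {h₁ : Disjoint A B} {h₂ : Disjoint A C}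
    {h₃ : Disjoint B C} {h₄ : Disjoint A D} {h₅ : Disjoint D C} (hBD : Disjoint B D)
    (hB : Derivable 𝒞 ⟨A, B, C, h₁, h₂, h₃⟩) (hD : Derivable 𝒞 ⟨A, D, C, h₄, h₂, h₅⟩) :
    Derivable 𝒞 ⟨A, B ∪ D, C, disjoint_union_right.2 ⟨h₁, h₄⟩, h₂,
      disjoint_union_left.2 ⟨h₃, h₅⟩⟩ :=
  contraction hBD (strongUnion h₄ hBD hB) hD

theorem of_forall_singleton_right {A B C : Finset α} (h₁ : Disjoint A B) (h₂ : Disjoint A C)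
    (h₃ : Disjoint B C)
    (h : ∀ b (hb : b ∈ B), Derivable 𝒞 ⟨A, {b}, C,
      disjoint_singleton_right.2 (disjoint_right.1 h₁ hb), h₂,
      disjoint_singleton_left.2 (disjoint_left.1 h₃ hb)⟩) :
    Derivable 𝒞 ⟨A, B, C, h₁, h₂, h₃⟩ := by
  induction B using Finset.induction_on with
  | empty => exact triviality A C h₂
  | @insert b s hbs ih =>
    rw [insert_eq, disjoint_union_right] at h₁
    rw [insert_eq, disjoint_union_left] at h₃
    have hs := ih h₁.2 h₃.2 fun x hx => h x (mem_insert_of_mem hx)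
    have hunion := union_right (disjoint_singleton_left.2 hbs) (h b (mem_insert_self b s)) hs
    convert hunion using 2
    exact insert_eq b s

end Derivable

theorem derivable_of_mem_wdec {c d : CI α} (hd : d ∈ wdec c) : Derivable {c} d := by
  obtain ⟨a, b, ha, hb, rfl⟩ := hd
  exact ((Derivable.mem (Set.mem_singleton c)).mono_right (singleton_subset_iff.2 hb)).mono_left
    (singleton_subset_iff.2 ha)

theorem derivable_wdec_self (c : CI α) : Derivable (wdec c) c := by
  refine .symmetry (.of_forall_singleton_right c.dAB.symm c.dBC c.dAC fun a ha => ?_)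
  refine .symmetry (.of_forall_singleton_right
    (disjoint_singleton_left.2 (disjoint_left.1 c.dAB ha)) _ c.dBC fun b hb => .mem ?_)
  exact ⟨a, b, ha, hb, rfl⟩

end

theorem closure_eq_closure_wdec_general {α : Type*} [DecidableEq α]
    (c : CI α) : ∀ d : CI α, Derivable {c} d ↔ Derivable (wdec c) d :=
  fun _ => ⟨fun hd => hd.trans fun _ hx => Set.mem_singleton_iff.1 hx ▸ derivable_wdec_self c,
    fun hd => hd.trans fun _ => derivable_of_mem_wdec⟩

/-- The closure under system A of a CI statement equals the closure of its
witness decomposition. -/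
theorem closure_eq_closure_wdec {α : Type*} [Fintype α] [DecidableEq α]
    (c : CI α) : ∀ d : CI α, Derivable {c} d ↔ Derivable (wdec c) d :=
  closure_eq_closure_wdec_general c
end

section
/- A Kronecker-induced function F_V (whose Möbius inversion is the indicator of the set V) a-satisfies a CI statement c if and only if V ∉ L(c). -/
/-!
`F_V` is `{0,1}`-valued and turns unions into products, `F_V(X ∪ Y) = F_V(X) F_V(Y)`. Hence
the defect `F(C) + F(A ∪ B ∪ C) - F(A ∪ C) - F(B ∪ C)` of any such `F` factors as
`F(C) (1 - F(A)) (1 - F(B))`, which for `F_V` is nonzero exactly when `C ⊆ V`, `A ⊄ V`, `B ⊄ V`.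
-/

open Finset

def asat {α : Type*} [DecidableEq α] (F : Finset α → ℝ) (c : CI α) : Prop :=
  F c.C + F (c.A ∪ c.B ∪ c.C) = F (c.A ∪ c.C) + F (c.B ∪ c.C)

/-- The Kronecker-induced function of V: F_V(X) = 1 if X ⊆ V, else 0. -/
def kronecker {α : Type*} [DecidableEq α] (V : Finset α) (X : Finset α) : ℝ :=
  if X ⊆ V then 1 else 0

section UnionMultiplicative

variable {α : Type*} [DecidableEq α] {F : Finset α → ℝ}

theorem asat_iff_of_map_union (hF : ∀ X Y, F (X ∪ Y) = F X * F Y) (c : CI α) :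
    asat F c ↔ F c.C * (1 - F c.A) * (1 - F c.B) = 0 := by
  rw [asat, hF, hF, hF, hF]
  constructor <;> intro h <;> linear_combination h

end UnionMultiplicative

section Kronecker

variable {α : Type*} [DecidableEq α] (V : Finset α)

theorem kronecker_union (X Y : Finset α) :
    kronecker V (X ∪ Y) = kronecker V X * kronecker V Y := by
  by_cases hX : X ⊆ V <;> by_cases hY : Y ⊆ V <;> simp [kronecker, union_subset_iff, hX, hY]

theorem kronecker_eq_zero_iff {X : Finset α} : kronecker V X = 0 ↔ ¬ X ⊆ V := by
  simp [kronecker]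

theorem one_sub_kronecker_eq_zero_iff {X : Finset α} : 1 - kronecker V X = 0 ↔ X ⊆ V := by
  simp [kronecker, sub_eq_zero]

end Kronecker

/-- A Kronecker-induced function F_V a-satisfies a CI statement c iff V ∉ L(c). -/
theorem kronecker_asat_iff_not_mem_lattice {α : Type*} [Fintype α] [DecidableEq α]
    (V : Finset α) (c : CI α) :
    asat (kronecker V) c ↔ V ∉ ciLattice c := by
  rw [asat_iff_of_map_union (kronecker_union V), mul_eq_zero, mul_eq_zero,
    kronecker_eq_zero_iff, one_sub_kronecker_eq_zero_iff, one_sub_kronecker_eq_zero_iff]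
  simp only [ciLattice, Set.mem_ofPred, not_and_or, not_not, or_assoc]
end

section
/- The falsification criterion is sound via lattices: if F is a set function with ΔF(U) = 0 for all U in ⋃_{c' ∈ C} L(c') and there exists U₀ ∈ L(c) with U₀ ∉ ⋃_{c' ∈ C} L(c') such that F is the Kronecker-induced function of U₀, then F a-satisfies every statement in C but does not a-satisfy c. -/
open Finset

def density {α : Type*} [Fintype α] [DecidableEq α] (F : Finset α → ℝ)
    (X : Finset α) : ℝ :=
  ∑ U ∈ Finset.univ.powerset.filter (fun U => X ⊆ U),
    (-1 : ℝ) ^ (U.card - X.card) * F U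

def kroneckerInduced {α : Type*} [DecidableEq α] (U₀ : Finset α) (X : Finset α) : ℝ :=
  if X ⊆ U₀ then 1 else 0

/-- Writing `a, b, k` for `A ⊆ U₀`, `B ⊆ U₀`, `C ⊆ U₀`, a-satisfaction reads
`[k] + [a ∧ b ∧ k] = [a ∧ k] + [b ∧ k]`, which fails exactly when `k ∧ ¬a ∧ ¬b`. -/
theorem asat_kroneckerInduced_iff {α : Type*} [Fintype α] [DecidableEq α]
    (U₀ : Finset α) (c : CI α) :
    asat (kroneckerInduced U₀) c ↔ U₀ ∉ ciLattice c := by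
  simp only [asat, kroneckerInduced, ciLattice, Set.mem_ofPred_eq, union_subset_iff]
  by_cases hA : c.A ⊆ U₀ <;> by_cases hB : c.B ⊆ U₀ <;> by_cases hC : c.C ⊆ U₀ <;>
    norm_num [hA, hB, hC]

theorem falsification_sound_general {α : Type*} [Fintype α] [DecidableEq α]
    (𝒞 : Set (CI α)) (c : CI α) (F : Finset α → ℝ) (U₀ : Finset α)
    (hU₀c : U₀ ∈ ciLattice c) (hU₀𝒞 : U₀ ∉ ⋃ c' ∈ 𝒞, ciLattice c')
    (hF : ∀ X : Finset α, F X = if X ⊆ U₀ then 1 else 0) :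
    (∀ c' ∈ 𝒞, asat F c') ∧ ¬ asat F c := by
  obtain rfl : F = kroneckerInduced U₀ := funext hF
  refine ⟨fun c' hc' => ?_, ?_⟩
  · exact (asat_kroneckerInduced_iff U₀ c').2 fun hU₀c' => hU₀𝒞 (Set.mem_biUnion hc' hU₀c')
  · exact fun hsat => (asat_kroneckerInduced_iff U₀ c).1 hsat hU₀c

/-- Soundness of the falsification criterion via lattices. -/
theorem falsification_sound {α : Type*} [Fintype α] [DecidableEq α]
    (𝒞 : Set (CI α)) (h𝒞 : 𝒞.Finite) (c : CI α) (F : Finset α → ℝ) (U₀ : Finset α)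
    (hzero : ∀ U ∈ ⋃ c' ∈ 𝒞, ciLattice c', density F U = 0)
    (hU₀c : U₀ ∈ ciLattice c) (hU₀𝒞 : U₀ ∉ ⋃ c' ∈ 𝒞, ciLattice c')
    (hF : ∀ X : Finset α, F X = if X ⊆ U₀ then 1 else 0) :
    (∀ c' ∈ 𝒞, asat F c') ∧ ¬ asat F c :=
  falsification_sound_general 𝒞 c F U₀ hU₀c hU₀𝒞 hF
end
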